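/- arXiv:2201.01680 — 5 statements merged into one kernel-verified Lean document; each statement's English description precedes it below -/
import Mathlib

section
/- Decomposition of the joint score's second moment (step in the proof of Van Trees' inequality): Under the hypotheses that λ : ℝᵖ → ℝ is a C^∞ probability density with compact support, that y ↦ p(y|θ) is a probability density on ℝᵐ for each θ with θ ↦ p(y|θ) continuously differentiable on the support of λ, that ∫ ∇_θ p(y|θ) dy = 0 for every θ in the support of λ (score has mean zero), and that all the integrals below are finite (so that Fubini's theorem applies), the second moment of the joint score satisfies ∫∫ ∇_θ log(p(y|θ)λ(θ)) (∇_θ log(p(y|θ)λ(θ)))ᵀ p(y|θ)λ(θ) dy dθ = ∫ I_p(θ)λ(θ)dθ + J(λ); in particular the cross terms ∫∫ ∇_θ p(y|θ) (∇λ(θ))ᵀ dy dθ and its transpose vanish. Here I_p(θ) = ∫ ∇_θ log p(y|θ)(∇_θ log p(y|θ))ᵀ p(y|θ) dy and J(λ) = ∫ ∇ log λ(θ)(∇ log λ(θ))ᵀ λ(θ) dθ. -/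
open MeasureTheory Matrix

/-- The Fisher information matrix
`I_p(θ) = ∫ ∇_θ log p(y|θ) (∇_θ log p(y|θ))ᵀ p(y|θ) dy`. -/
noncomputable def fisherInfoMatrix {M P : ℕ}
    (p : EuclideanSpace ℝ (Fin M) → EuclideanSpace ℝ (Fin P) → ℝ)
    (θ : EuclideanSpace ℝ (Fin P)) : Matrix (Fin P) (Fin P) ℝ :=
  Matrix.of fun i j =>
    ∫ y, gradient (fun t => Real.log (p y t)) θ i *
      gradient (fun t => Real.log (p y t)) θ j * p y θ

/-- The prior (location) information matrix
`J(λ) = ∫ ∇ log λ(θ) (∇ log λ(θ))ᵀ λ(θ) dθ`. -/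
noncomputable def priorInfoMatrix {P : ℕ}
    (lam : EuclideanSpace ℝ (Fin P) → ℝ) : Matrix (Fin P) (Fin P) ℝ :=
  Matrix.of fun i j =>
    ∫ θ, gradient (fun t => Real.log (lam t)) θ i *
      gradient (fun t => Real.log (lam t)) θ j * lam θ

/-- The second moment of the joint score
`∫∫ ∇_θ log(p(y|θ)λ(θ)) (∇_θ log(p(y|θ)λ(θ)))ᵀ p(y|θ)λ(θ) dy dθ`. -/
noncomputable def jointScoreSecondMoment {M P : ℕ}
    (p : EuclideanSpace ℝ (Fin M) → EuclideanSpace ℝ (Fin P) → ℝ)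
    (lam : EuclideanSpace ℝ (Fin P) → ℝ) : Matrix (Fin P) (Fin P) ℝ :=
  Matrix.of fun i j =>
    ∫ θ, ∫ y, gradient (fun t => Real.log (p y t * lam t)) θ i *
      gradient (fun t => Real.log (p y t * lam t)) θ j * (p y θ * lam θ)

/-- The cross term `∫∫ ∇_θ p(y|θ) (∇λ(θ))ᵀ dy dθ`. -/
noncomputable def crossTermMatrix {M P : ℕ}
    (p : EuclideanSpace ℝ (Fin M) → EuclideanSpace ℝ (Fin P) → ℝ)
    (lam : EuclideanSpace ℝ (Fin P) → ℝ) : Matrix (Fin P) (Fin P) ℝ :=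
  Matrix.of fun i j =>
    ∫ θ, ∫ y, gradient (fun t => p y t) θ i * gradient lam θ j

section AuxLemmas

open Filter Topology InnerProductSpace Function

variable {Q : ℕ}

private lemma gradient_apply_eq (f : EuclideanSpace ℝ (Fin Q) → ℝ)
    (x : EuclideanSpace ℝ (Fin Q)) (i : Fin Q) :
    gradient f x i = fderiv ℝ f x (EuclideanSpace.single i 1) := by
  have h : ⟪(toDual ℝ (EuclideanSpace ℝ (Fin Q))).symm (fderiv ℝ f x),
      EuclideanSpace.single i (1:ℝ)⟫_ℝ = fderiv ℝ f x (EuclideanSpace.single i 1) :=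
    InnerProductSpace.toDual_symm_apply
  rw [show gradient f x = (toDual ℝ (EuclideanSpace ℝ (Fin Q))).symm (fderiv ℝ f x) from rfl]
  rw [← h, EuclideanSpace.inner_single_right]
  simp

private lemma gradient_congr_nhds {f g : EuclideanSpace ℝ (Fin Q) → ℝ}
    {x : EuclideanSpace ℝ (Fin Q)} (h : f =ᶠ[𝓝 x] g) : gradient f x = gradient g x := by
  rw [show gradient f x = (toDual ℝ (EuclideanSpace ℝ (Fin Q))).symm (fderiv ℝ f x) from rfl,
    show gradient g x = (toDual ℝ (EuclideanSpace ℝ (Fin Q))).symm (fderiv ℝ g x) from rfl,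
    h.fderiv_eq]

private lemma gradient_log_apply {f : EuclideanSpace ℝ (Fin Q) → ℝ}
    {x : EuclideanSpace ℝ (Fin Q)} (hf : DifferentiableAt ℝ f x) (hx : f x ≠ 0) (i : Fin Q) :
    gradient (fun t => Real.log (f t)) x i = (f x)⁻¹ * gradient f x i := by
  have h := (hf.hasFDerivAt.log hx).fderiv
  rw [gradient_apply_eq, h, gradient_apply_eq]
  simp

private lemma integrable_euclidean {α : Type*} [MeasurableSpace α] {μ : MeasureTheory.Measure α}
    {f : α → EuclideanSpace ℝ (Fin Q)} (h : ∀ i, MeasureTheory.Integrable (fun y => f y i) μ) :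
    MeasureTheory.Integrable f μ := by
  have hf : ∀ y, f y = ∑ i, (f y i) • (EuclideanSpace.basisFun (Fin Q) ℝ) i := fun y => by
    simpa [EuclideanSpace.basisFun_repr] using
      ((EuclideanSpace.basisFun (Fin Q) ℝ).sum_repr (f y)).symm
  have hint : MeasureTheory.Integrable
      (fun y => ∑ i, (f y i) • (EuclideanSpace.basisFun (Fin Q) ℝ) i) μ :=
    MeasureTheory.integrable_finset_sum _ fun i _ => (h i).smul_const _
  exact hint.congr (Filter.Eventually.of_forall fun y => (hf y).symm)

private lemma integral_euclid_apply {α : Type*} [MeasurableSpace α]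
    {μ : MeasureTheory.Measure α} {f : α → EuclideanSpace ℝ (Fin Q)}
    (hf : MeasureTheory.Integrable f μ) (i : Fin Q) :
    (∫ y, f y i ∂μ) = (∫ y, f y ∂μ) i := by
  have h := (EuclideanSpace.proj i : EuclideanSpace ℝ (Fin Q) →L[ℝ] ℝ).integral_comp_comm hf
  simpa using h

end AuxLemmas


/-- Decomposition of the joint score's second moment: under the stated
regularity and integrability hypotheses, the second moment of the joint score
equals `∫ I_p(θ)λ(θ)dθ + J(λ)`; in particular the cross terms
`∫∫ ∇_θ p(y|θ)(∇λ(θ))ᵀ dy dθ` and its transpose vanish. -/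
theorem joint_score_second_moment_decomposition {M P : ℕ}
    (lam : EuclideanSpace ℝ (Fin P) → ℝ)
    (p : EuclideanSpace ℝ (Fin M) → EuclideanSpace ℝ (Fin P) → ℝ)
    -- λ is a C^∞ probability density with compact support
    (hlam_smooth : ContDiff ℝ (⊤ : ℕ∞) lam)
    (hlam_supp : HasCompactSupport lam)
    (hlam_nonneg : ∀ θ, 0 ≤ lam θ)
    (hlam_density : (∫ θ, lam θ) = 1)
    -- p(·|θ) is a probability density for each θ, C¹ in θ on the support of λ
    (hp_nonneg : ∀ y θ, 0 ≤ p y θ)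
    (hp_density : ∀ θ, (∫ y, p y θ) = 1)
    (hp_diff : ∀ y, ContDiffOn ℝ 1 (fun θ => p y θ) (tsupport lam))
    -- the score has mean zero on the support of λ
    (hscore : ∀ θ ∈ tsupport lam, (∫ y, gradient (fun t => p y t) θ) = 0)
    -- all integrals below are finite (so that Fubini's theorem applies)
    (hjoint_inner : ∀ θ, ∀ i j,
      Integrable (fun y => gradient (fun t => Real.log (p y t * lam t)) θ i *
        gradient (fun t => Real.log (p y t * lam t)) θ j * (p y θ * lam θ)))
    (hjoint_outer : ∀ i j, Integrable (fun θ =>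
      ∫ y, gradient (fun t => Real.log (p y t * lam t)) θ i *
        gradient (fun t => Real.log (p y t * lam t)) θ j * (p y θ * lam θ)))
    (hfisher_fin : ∀ θ, ∀ i j,
      Integrable (fun y => gradient (fun t => Real.log (p y t)) θ i *
        gradient (fun t => Real.log (p y t)) θ j * p y θ))
    (hF_int : ∀ i j, Integrable (fun θ => fisherInfoMatrix p θ i j * lam θ))
    (hJ_fin : ∀ i j, Integrable (fun θ =>
      gradient (fun t => Real.log (lam t)) θ i *
        gradient (fun t => Real.log (lam t)) θ j * lam θ))
    (hcross_inner : ∀ θ, ∀ i j,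
      Integrable (fun y => gradient (fun t => p y t) θ i * gradient lam θ j))
    (hcross_outer : ∀ i j, Integrable (fun θ =>
      ∫ y, gradient (fun t => p y t) θ i * gradient lam θ j)) :
    jointScoreSecondMoment p lam =
        (Matrix.of fun i j => ∫ θ, fisherInfoMatrix p θ i j * lam θ) +
          priorInfoMatrix lam ∧
      crossTermMatrix p lam = 0 ∧ (crossTermMatrix p lam)ᵀ = 0 := by
  have hlamdiff : ∀ θ, DifferentiableAt ℝ lam θ :=
    fun θ => (hlam_smooth.differentiable (by simp)).differentiableAt
  -- the cross-term inner integral vanishes for every θ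
  have crosskey : ∀ (i j : Fin P) (θ : EuclideanSpace ℝ (Fin P)),
      (∫ y, gradient (fun t => p y t) θ i * gradient lam θ j) = 0 := by
    intro i j θ
    by_cases hg : gradient lam θ j = 0
    · simp [hg]
    · have hθt : θ ∈ tsupport lam := by
        by_contra h
        have h0 : lam =ᶠ[nhds θ] 0 := notMem_tsupport_iff_eventuallyEq.1 h
        have hgz : gradient lam θ = gradient (fun _ => (0:ℝ)) θ := gradient_congr_nhds h0
        rw [gradient_fun_const] at hgz
        exact hg (by rw [hgz]; rfl)
      have hcomp : ∀ k, Integrable (fun y => gradient (fun t => p y t) θ k) := fun k => by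
        have h1 := (hcross_inner θ k j).mul_const (gradient lam θ j)⁻¹
        simpa [mul_assoc, mul_inv_cancel₀ hg] using h1
      have hvec : Integrable (fun y => gradient (fun t => p y t) θ) :=
        integrable_euclidean hcomp
      have h0 : (∫ y, gradient (fun t => p y t) θ i) = 0 := by
        rw [integral_euclid_apply hvec i, hscore θ hθt]; rfl
      rw [integral_mul_const, h0, zero_mul]
  -- the key inner-integral identity
  have key : ∀ (i j : Fin P) (θ : EuclideanSpace ℝ (Fin P)),
      (∫ y, gradient (fun t => Real.log (p y t * lam t)) θ i *
        gradient (fun t => Real.log (p y t * lam t)) θ j * (p y θ * lam θ))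
      = fisherInfoMatrix p θ i j * lam θ
        + gradient (fun t => Real.log (lam t)) θ i *
            gradient (fun t => Real.log (lam t)) θ j * lam θ := by
    intro i j θ
    by_cases hθ : lam θ = 0
    · simp [hθ, fisherInfoMatrix]
    · have hlampos : 0 < lam θ := (hlam_nonneg θ).lt_of_ne (Ne.symm hθ)
      have hsupp : θ ∈ Function.support lam := hθ
      have hopen : IsOpen (Function.support lam) := hlam_smooth.continuous.isOpen_support
      have hmem : tsupport lam ∈ nhds θ :=
        mem_nhds_iff.2 ⟨Function.support lam, subset_tsupport lam, hopen, hsupp⟩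
      have hpdiff : ∀ y, DifferentiableAt ℝ (fun t => p y t) θ := fun y =>
        (((hp_diff y).contDiffAt hmem).differentiableAt one_ne_zero)
      set L : Fin P → ℝ := fun k => gradient (fun t => Real.log (lam t)) θ k with hL
      -- pointwise identity
      have hptw : ∀ y,
          gradient (fun t => Real.log (p y t * lam t)) θ i *
            gradient (fun t => Real.log (p y t * lam t)) θ j * (p y θ * lam θ)
          = gradient (fun t => Real.log (p y t)) θ i *
              gradient (fun t => Real.log (p y t)) θ j * p y θ * lam θ
            + (gradient (fun t => p y t) θ i * (L j * lam θ)
            + (gradient (fun t => p y t) θ j * (L i * lam θ)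
            + (L i * L j * lam θ) * p y θ)) := by
        intro y
        rcases eq_or_lt_of_le (hp_nonneg y θ) with hp0 | hppos
        · have hmin : IsLocalMin (fun t => p y t) θ :=
            Filter.Eventually.of_forall fun t => by
              show p y θ ≤ p y t
              rw [← hp0]; exact hp_nonneg y t
          have hg : ∀ k, gradient (fun t => p y t) θ k = 0 := by
            intro k
            rw [gradient_apply_eq, hmin.fderiv_eq_zero]
            simp
          simp [← hp0, hg]
        · have hev : (fun t => Real.log (p y t * lam t))
              =ᶠ[nhds θ] fun t => Real.log (p y t) + Real.log (lam t) := by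
            filter_upwards [((hpdiff y).continuousAt).eventually_ne hppos.ne',
              ((hlamdiff θ).continuousAt).eventually_ne hθ] with t h1 h2
            exact Real.log_mul h1 h2
          have hdp : DifferentiableAt ℝ (fun t => Real.log (p y t)) θ :=
            (hpdiff y).log hppos.ne'
          have hdl : DifferentiableAt ℝ (fun t => Real.log (lam t)) θ :=
            (hlamdiff θ).log hθ
          have hG : ∀ k, gradient (fun t => Real.log (p y t * lam t)) θ k
              = gradient (fun t => Real.log (p y t)) θ k + L k := by
            intro k
            rw [gradient_apply_eq, hev.fderiv_eq, fderiv_fun_add hdp hdl,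
              ContinuousLinearMap.add_apply, ← gradient_apply_eq, ← gradient_apply_eq]
          have hgrad : ∀ k, gradient (fun t => p y t) θ k
              = p y θ * gradient (fun t => Real.log (p y t)) θ k := by
            intro k
            rw [gradient_log_apply (hpdiff y) hppos.ne']
            field_simp
          rw [hG i, hG j, hgrad i, hgrad j]
          ring
      -- integrability of the four pieces
      have hp_int : Integrable (fun y => p y θ) :=
        Integrable.of_integral_ne_zero (by rw [hp_density θ]; exact one_ne_zero)
      have ht1 : Integrable (fun y => gradient (fun t => Real.log (p y t)) θ i *
          gradient (fun t => Real.log (p y t)) θ j * p y θ * lam θ) :=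
        (hfisher_fin θ i j).mul_const _
      have ht4 : Integrable (fun y => (L i * L j * lam θ) * p y θ) :=
        hp_int.const_mul _
      have hgradL : ∀ k, gradient lam θ k = lam θ * L k := by
        intro k
        rw [hL]
        simp only []
        rw [gradient_log_apply (hlamdiff θ) hθ]
        field_simp
      have ht23 : ∀ a b : Fin P,
          Integrable (fun y => gradient (fun t => p y t) θ a * (L b * lam θ))
          ∧ (∫ y, gradient (fun t => p y t) θ a * (L b * lam θ)) = 0 := by
        intro a b
        by_cases hLb : L b = 0
        · constructor
          · simpa [hLb] using (integrable_const (0:ℝ))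
          · simp [hLb]
        · have hgb : gradient lam θ b ≠ 0 := by
            rw [hgradL b]
            exact mul_ne_zero hθ hLb
          have hcomp : ∀ k, Integrable (fun y => gradient (fun t => p y t) θ k) := fun k => by
            have h1 := (hcross_inner θ k b).mul_const (gradient lam θ b)⁻¹
            simpa [mul_assoc, mul_inv_cancel₀ hgb] using h1
          have hvec : Integrable (fun y => gradient (fun t => p y t) θ) :=
            integrable_euclidean hcomp
          have h0 : (∫ y, gradient (fun t => p y t) θ a) = 0 := by
            rw [integral_euclid_apply hvec a, hscore θ (subset_tsupport lam hsupp)]; rfl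
          exact ⟨(hcomp a).mul_const _, by rw [integral_mul_const, h0, zero_mul]⟩
      have ht2 := ht23 i j
      have ht3 := ht23 j i
      have hrest2 : Integrable (fun y => gradient (fun t => p y t) θ j * (L i * lam θ)
          + (L i * L j * lam θ) * p y θ) := ht3.1.add ht4
      have hrest : Integrable (fun y => gradient (fun t => p y t) θ i * (L j * lam θ)
          + (gradient (fun t => p y t) θ j * (L i * lam θ)
            + (L i * L j * lam θ) * p y θ)) := ht2.1.add hrest2
      have e1 := integral_add ht1 hrest
      have e2 := integral_add ht2.1 hrest2
      have e3 := integral_add ht3.1 ht4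
      beta_reduce at e1 e2 e3
      rw [MeasureTheory.integral_congr_ae (Filter.Eventually.of_forall hptw),
        e1, e2, e3, ht2.2, ht3.2, integral_mul_const, integral_const_mul, hp_density θ]
      simp [fisherInfoMatrix, hL]
  refine ⟨?_, ?_, ?_⟩
  · ext i j
    simp only [jointScoreSecondMoment, priorInfoMatrix, Matrix.add_apply, Matrix.of_apply]
    rw [MeasureTheory.integral_congr_ae (Filter.Eventually.of_forall fun θ => key i j θ),
      integral_add (hF_int i j) (hJ_fin i j)]
  · ext i j
    simp [crossTermMatrix, crosskey]
  · ext i j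
    simp [crossTermMatrix, crosskey]
end

section
/- Structure and dimension of the information-singular subspace for unstructured LQR uncertainty (core of Proposition on unstructured uncertainty): Let K ∈ ℝ^{d_u×d_x}, let Σ ∈ ℝ^{d_x×d_x} be positive definite, and let H ∈ ℝ^{(d_x+d_u)×d_x} be the block matrix with I_{d_x} on top of K, i.e., H = [I_{d_x}; K]. Then the kernel of the Kronecker product (HHᵀ) ⊗ Σ⁻¹ ∈ ℝ^{(d_x+d_u)d_x × (d_x+d_u)d_x} equals the image of the injective linear map Δ ↦ vec[−ΔK, Δ] from ℝ^{d_x×d_u} to ℝ^{(d_x+d_u)d_x}, where [−ΔK, Δ] ∈ ℝ^{d_x×(d_x+d_u)} is the horizontal concatenation of −ΔK and Δ; in particular this kernel has dimension d_x·d_u. -/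
open Matrix Kronecker

/-- Vectorization of a `d_x × (d_x + d_u)` matrix: the vector obtained by stacking
its columns, so that `vec X (col, row) = X row col`; with this convention
`vec (M N P) = (Pᵀ ⊗ M) vec N`. -/
def vecMat {dx du : ℕ} (X : Matrix (Fin dx) (Fin dx ⊕ Fin du) ℝ) :
    (Fin dx ⊕ Fin du) × Fin dx → ℝ :=
  fun q => X q.2 q.1

lemma kron_mulVec_eq {n m : Type*} [Fintype n] [Fintype m]
    (A : Matrix n n ℝ) (B : Matrix m m ℝ) (w : n × m → ℝ) (q : n) (i : m) :
    (A ⊗ₖ B).mulVec w (q, i) = (B * (Matrix.of fun i q => w (q, i)) * Aᵀ) i q := by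
  simp only [Matrix.mulVec, Matrix.mul_apply, dotProduct, kroneckerMap_apply,
    Fintype.sum_prod_type, Matrix.transpose_apply, Matrix.of_apply, Finset.sum_mul]
  apply Finset.sum_congr rfl
  intro x _
  apply Finset.sum_congr rfl
  intro y _
  ring

/-- Structure and dimension of the information-singular subspace for unstructured
LQR uncertainty: for `H = [I; K]` and `Σ` positive definite, the kernel of
`(HHᵀ) ⊗ Σ⁻¹` equals the image of the injective linear map
`Δ ↦ vec [−ΔK, Δ]`, and has dimension `d_x · d_u`. -/
theorem kernel_kronecker_gram {dx du : ℕ} (K : Matrix (Fin du) (Fin dx) ℝ)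
    (S : Matrix (Fin dx) (Fin dx) ℝ) (hS : S.PosDef) :
    Function.Injective (fun Δ : Matrix (Fin dx) (Fin du) ℝ =>
        vecMat (Matrix.fromCols (-(Δ * K)) Δ)) ∧
      (∀ w : (Fin dx ⊕ Fin du) × Fin dx → ℝ,
          w ∈ LinearMap.ker
              (((Matrix.fromRows (1 : Matrix (Fin dx) (Fin dx) ℝ) K *
                  (Matrix.fromRows (1 : Matrix (Fin dx) (Fin dx) ℝ) K)ᵀ) ⊗ₖ S⁻¹).mulVecLin) ↔
            ∃ Δ : Matrix (Fin dx) (Fin du) ℝ,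
              vecMat (Matrix.fromCols (-(Δ * K)) Δ) = w) ∧
      Module.finrank ℝ
          (LinearMap.ker
            (((Matrix.fromRows (1 : Matrix (Fin dx) (Fin dx) ℝ) K *
                (Matrix.fromRows (1 : Matrix (Fin dx) (Fin dx) ℝ) K)ᵀ) ⊗ₖ S⁻¹).mulVecLin)) =
        dx * du := by
  set H : Matrix (Fin dx ⊕ Fin du) (Fin dx) ℝ := Matrix.fromRows 1 K with hHdef
  have hSdet : IsUnit S.det := isUnit_iff_ne_zero.2 hS.det_pos.ne'
  have hsym : (H * Hᵀ)ᵀ = H * Hᵀ := by rw [Matrix.transpose_mul, Matrix.transpose_transpose]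
  -- injectivity
  have hinj : Function.Injective (fun Δ : Matrix (Fin dx) (Fin du) ℝ =>
      vecMat (Matrix.fromCols (-(Δ * K)) Δ)) := by
    intro Δ₁ Δ₂ h
    ext i j
    have := congrFun h (Sum.inr j, i)
    simpa [vecMat, Matrix.fromCols] using this
  -- kernel characterization
  have hker : ∀ w : (Fin dx ⊕ Fin du) × Fin dx → ℝ,
      w ∈ LinearMap.ker (((H * Hᵀ) ⊗ₖ S⁻¹).mulVecLin) ↔
        ∃ Δ : Matrix (Fin dx) (Fin du) ℝ,
          vecMat (Matrix.fromCols (-(Δ * K)) Δ) = w := by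
    intro w
    set W : Matrix (Fin dx) (Fin dx ⊕ Fin du) ℝ := Matrix.of fun i q => w (q, i) with hWdef
    have hmem : w ∈ LinearMap.ker (((H * Hᵀ) ⊗ₖ S⁻¹).mulVecLin) ↔
        S⁻¹ * W * (H * Hᵀ) = 0 := by
      rw [LinearMap.mem_ker]
      constructor
      · intro hw
        ext i q
        have := congrFun hw (q, i)
        rw [Matrix.mulVecLin_apply, kron_mulVec_eq, hsym, ← hWdef] at this
        simpa using this
      · intro h0
        funext p
        obtain ⟨q, i⟩ := p
        rw [Matrix.mulVecLin_apply, kron_mulVec_eq, hsym, ← hWdef, h0]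
        simp
    have hWH : w ∈ LinearMap.ker (((H * Hᵀ) ⊗ₖ S⁻¹).mulVecLin) ↔ W * H = 0 := by
      rw [hmem]
      constructor
      · intro h0
        have h1 : W * (H * Hᵀ) = 0 := by
          have := congrArg (fun M => S * M) h0
          simpa [← Matrix.mul_assoc, Matrix.mul_nonsing_inv S hSdet] using this
        have h2 : W * (H * Hᴴ) = 0 := by
          rw [Matrix.conjTranspose_eq_transpose_of_trivial]; exact h1
        exact (Matrix.mul_self_mul_conjTranspose_eq_zero H W).1 h2
      · intro h0
        rw [← Matrix.mul_assoc, Matrix.mul_assoc S⁻¹ W H, h0, Matrix.mul_zero,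
          Matrix.zero_mul]
    rw [hWH]
    constructor
    · intro h0
      refine ⟨Matrix.of fun i j => w (Sum.inr j, i), ?_⟩
      funext p
      obtain ⟨q, i⟩ := p
      have hrow := congrFun (congrFun h0 i)
      cases q with
      | inl a =>
        have := hrow a
        simp only [Matrix.mul_apply, Matrix.zero_apply, hHdef, hWdef] at this
        rw [Fintype.sum_sum_type] at this
        simp only [Matrix.fromRows_apply_inl, Matrix.fromRows_apply_inr, Matrix.of_apply] at this
        have hsum : ∑ b, w (Sum.inl b, i) * (1 : Matrix (Fin dx) (Fin dx) ℝ) b a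
            = w (Sum.inl a, i) := by
          simp [Matrix.one_apply]
        rw [hsum] at this
        simp only [vecMat, Matrix.fromCols, Matrix.of_apply, Sum.elim_inl, Matrix.neg_apply,
          Matrix.mul_apply]
        linarith [this]
      | inr j =>
        simp [vecMat, Matrix.fromCols]
    · rintro ⟨Δ, rfl⟩
      have hWeq : W = Matrix.fromCols (-(Δ * K)) Δ := by
        ext i q
        cases q <;> simp [hWdef, vecMat, Matrix.fromCols]
      rw [hWeq, hHdef, Matrix.fromCols_mul_fromRows]
      simp
  -- linear map version for rank
  let L : Matrix (Fin dx) (Fin du) ℝ →ₗ[ℝ] ((Fin dx ⊕ Fin du) × Fin dx → ℝ) :=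
    { toFun := fun Δ => vecMat (Matrix.fromCols (-(Δ * K)) Δ)
      map_add' := by
        intro Δ₁ Δ₂
        funext p
        obtain ⟨q, i⟩ := p
        cases q <;> simp [vecMat, Matrix.fromCols, Matrix.add_mul] <;> ring
      map_smul' := by
        intro c Δ
        funext p
        obtain ⟨q, i⟩ := p
        cases q <;> simp [vecMat, Matrix.fromCols, Matrix.smul_mul] <;> ring }
  have hrange : LinearMap.ker (((H * Hᵀ) ⊗ₖ S⁻¹).mulVecLin) = LinearMap.range L := by
    ext w
    rw [hker w]
    simp only [LinearMap.mem_range]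
    tauto
  refine ⟨hinj, hker, ?_⟩
  rw [hrange, LinearMap.finrank_range_of_inj hinj]
  simp [Module.finrank_matrix]
end

section
/- Closed-loop limit as control authority vanishes (step in the proof of the marginal-stability failure mode): Let a ∈ ℝ with |a| > 1. For b ≠ 0 define p(b) := ((a² + b² − 1) + √((a² + b² − 1)² + 4b²))/(2b²) and k(b) := −a b p(b)/(b²p(b) + 1). Then a + b·k(b) = a/(b²p(b) + 1) for all b ≠ 0, lim_{b→0} b²p(b) = a² − 1, and consequently lim_{b→0} (a + b·k(b)) = 1/a and lim_{b→0} p(b) = +∞. -/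
open Filter Topology

/-- Closed-loop limit as control authority vanishes: for `|a| > 1`, with
`p(b)` the positive solution of the scalar Riccati equation with unit weights and
`k(b)` the associated optimal gain, one has `a + b·k(b) = a/(b²p(b) + 1)` for all
`b ≠ 0`, `b²p(b) → a² − 1` as `b → 0`, and consequently `a + b·k(b) → 1/a`
and `p(b) → +∞` as `b → 0`. -/
theorem closed_loop_limit_vanishing_control (a : ℝ) (ha : 1 < |a|)
    (p k : ℝ → ℝ)
    (hp : ∀ b : ℝ, b ≠ 0 →
      p b = ((a ^ 2 + b ^ 2 - 1) +
        Real.sqrt ((a ^ 2 + b ^ 2 - 1) ^ 2 + 4 * b ^ 2)) / (2 * b ^ 2))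
    (hk : ∀ b : ℝ, b ≠ 0 → k b = -(a * b * p b) / (b ^ 2 * p b + 1)) :
    (∀ b : ℝ, b ≠ 0 → a + b * k b = a / (b ^ 2 * p b + 1)) ∧
      Tendsto (fun b => b ^ 2 * p b) (𝓝[≠] (0 : ℝ)) (𝓝 (a ^ 2 - 1)) ∧
      Tendsto (fun b => a + b * k b) (𝓝[≠] (0 : ℝ)) (𝓝 (1 / a)) ∧
      Tendsto p (𝓝[≠] (0 : ℝ)) atTop := by
  have ha2 : 1 < a ^ 2 := by nlinarith [sq_abs a, abs_nonneg a]
  have ha0 : a ≠ 0 := by intro h; rw [h] at ha2; norm_num at ha2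
  have key : ∀ b : ℝ, b ≠ 0 → b ^ 2 * p b =
      ((a ^ 2 + b ^ 2 - 1) + Real.sqrt ((a ^ 2 + b ^ 2 - 1) ^ 2 + 4 * b ^ 2)) / 2 := by
    intro b hb
    rw [hp b hb]
    have hb2 : b ^ 2 ≠ 0 := pow_ne_zero 2 hb
    field_simp
  have hpos : ∀ b : ℝ, b ≠ 0 → 0 < b ^ 2 * p b := by
    intro b hb
    rw [key b hb]
    have h1 : 0 < a ^ 2 + b ^ 2 - 1 := by nlinarith [sq_nonneg b]
    have h2 := Real.sqrt_nonneg ((a ^ 2 + b ^ 2 - 1) ^ 2 + 4 * b ^ 2)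
    linarith
  have hden : ∀ b : ℝ, b ≠ 0 → b ^ 2 * p b + 1 ≠ 0 := fun b hb =>
    ne_of_gt (by linarith [hpos b hb])
  have part1 : ∀ b : ℝ, b ≠ 0 → a + b * k b = a / (b ^ 2 * p b + 1) := by
    intro b hb
    rw [hk b hb]
    field_simp [hden b hb]
    ring
  have part2 : Tendsto (fun b => b ^ 2 * p b) (𝓝[≠] (0 : ℝ)) (𝓝 (a ^ 2 - 1)) := by
    have hcont : Tendsto (fun b : ℝ =>
        ((a ^ 2 + b ^ 2 - 1) + Real.sqrt ((a ^ 2 + b ^ 2 - 1) ^ 2 + 4 * b ^ 2)) / 2)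
        (𝓝 0) (𝓝 (a ^ 2 - 1)) := by
      have hc : Continuous (fun b : ℝ =>
          ((a ^ 2 + b ^ 2 - 1) + Real.sqrt ((a ^ 2 + b ^ 2 - 1) ^ 2 + 4 * b ^ 2)) / 2) := by
        fun_prop
      have hval : ((a ^ 2 + (0:ℝ) ^ 2 - 1) +
          Real.sqrt ((a ^ 2 + (0:ℝ) ^ 2 - 1) ^ 2 + 4 * (0:ℝ) ^ 2)) / 2 = a ^ 2 - 1 := by
        have : Real.sqrt ((a ^ 2 - 1) ^ 2) = a ^ 2 - 1 :=
          Real.sqrt_sq (by linarith)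
        norm_num
        linarith [this]
      have := hc.tendsto 0
      rwa [hval] at this
    refine Tendsto.congr' ?_ (hcont.mono_left nhdsWithin_le_nhds)
    filter_upwards [self_mem_nhdsWithin] with b hb
    exact (key b hb).symm
  have part3 : Tendsto (fun b => a + b * k b) (𝓝[≠] (0 : ℝ)) (𝓝 (1 / a)) := by
    have hd : Tendsto (fun b => b ^ 2 * p b + 1) (𝓝[≠] (0 : ℝ)) (𝓝 (a ^ 2)) := by
      have := part2.add_const 1
      simpa using this
    have h := (tendsto_const_nhds : Tendsto (fun _ : ℝ => a) (𝓝[≠] (0:ℝ)) (𝓝 a)).div hd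
      (by positivity)
    have haa : a / a ^ 2 = 1 / a := by field_simp
    rw [haa] at h
    refine Tendsto.congr' ?_ h
    filter_upwards [self_mem_nhdsWithin] with b hb
    exact (part1 b hb).symm
  refine ⟨part1, part2, part3, ?_⟩
  have hsq : Tendsto (fun b : ℝ => b ^ 2) (𝓝[≠] (0 : ℝ)) (𝓝[>] (0 : ℝ)) := by
    rw [tendsto_nhdsWithin_iff]
    constructor
    · have : Tendsto (fun b : ℝ => b ^ 2) (𝓝 0) (𝓝 0) := by
        simpa using (continuous_pow 2).tendsto (0 : ℝ)
      exact this.mono_left nhdsWithin_le_nhds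
    · filter_upwards [self_mem_nhdsWithin] with b hb
      exact pow_two_pos_of_ne_zero hb
  have hinv : Tendsto (fun b : ℝ => (b ^ 2)⁻¹) (𝓝[≠] (0 : ℝ)) atTop :=
    tendsto_inv_nhdsGT_zero.comp hsq
  have hmul : Tendsto (fun b : ℝ => b ^ 2 * p b * (b ^ 2)⁻¹) (𝓝[≠] (0 : ℝ)) atTop :=
    Tendsto.pos_mul_atTop (by linarith) part2 hinv
  refine Tendsto.congr' ?_ hmul
  filter_upwards [self_mem_nhdsWithin] with b hb
  have hb2 : b ^ 2 ≠ 0 := pow_ne_zero 2 hb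
  field_simp
  exact mul_div_cancel_left₀ (p b) hb
end

section
/- Gain blow-up and cost-to-gain ratio as control authority vanishes (steps in the proof of the marginal-stability failure mode): Let a ∈ ℝ with |a| > 1. For b ≠ 0 define p(b) := ((a² + b² − 1) + √((a² + b² − 1)² + 4b²))/(2b²) and k(b) := −a b p(b)/(b²p(b) + 1). Then lim_{b→0} |k(b)| = +∞ and lim_{b→0} p(b)/k(b)² = a²/(a² − 1); in particular lim_{b→0} p(b)/k(b)² ≥ 1. -/
open Filter Topology

/-- Gain blow-up and cost-to-gain ratio as control authority vanishes: for
`|a| > 1`, with `p(b)` the positive solution of the scalar Riccati equation with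
unit weights and `k(b)` the associated optimal gain, one has `|k(b)| → +∞` and
`p(b)/k(b)² → a²/(a² − 1)` as `b → 0`; in particular the limit is `≥ 1`. -/
theorem gain_blowup_vanishing_control (a : ℝ) (ha : 1 < |a|)
    (p k : ℝ → ℝ)
    (hp : ∀ b : ℝ, b ≠ 0 →
      p b = ((a ^ 2 + b ^ 2 - 1) +
        Real.sqrt ((a ^ 2 + b ^ 2 - 1) ^ 2 + 4 * b ^ 2)) / (2 * b ^ 2))
    (hk : ∀ b : ℝ, b ≠ 0 → k b = -(a * b * p b) / (b ^ 2 * p b + 1)) :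
    Tendsto (fun b => |k b|) (𝓝[≠] (0 : ℝ)) atTop ∧
      Tendsto (fun b => p b / (k b) ^ 2) (𝓝[≠] (0 : ℝ)) (𝓝 (a ^ 2 / (a ^ 2 - 1))) ∧
      1 ≤ a ^ 2 / (a ^ 2 - 1) := by
  have ha2 : 1 < a ^ 2 := by nlinarith [sq_abs a, abs_nonneg a]
  have ha0 : a ≠ 0 := by intro h; rw [h] at ha2; norm_num at ha2
  set g : ℝ → ℝ := fun b =>
      ((a ^ 2 + b ^ 2 - 1) + Real.sqrt ((a ^ 2 + b ^ 2 - 1) ^ 2 + 4 * b ^ 2)) / 2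
      with hg_def
  have hgcont : Continuous g := by
    apply Continuous.div_const
    exact (by continuity : Continuous fun b : ℝ => (a ^ 2 + b ^ 2 - 1)).add
      ((by continuity : Continuous fun b : ℝ =>
        ((a ^ 2 + b ^ 2 - 1) ^ 2 + 4 * b ^ 2)).sqrt)
  have hg0 : g 0 = a ^ 2 - 1 := by
    simp only [hg_def]
    rw [show (0:ℝ) ^ 2 = 0 by ring]
    rw [show (a ^ 2 + 0 - 1) ^ 2 + 4 * 0 = (a ^ 2 - 1) ^ 2 by ring]
    rw [Real.sqrt_sq (by linarith)]
    ring
  have hgpos : ∀ b : ℝ, b ≠ 0 → 0 < g b := by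
    intro b hb
    have h4 : 0 < 4 * b ^ 2 := by positivity
    have h1 : |a ^ 2 + b ^ 2 - 1| < Real.sqrt ((a ^ 2 + b ^ 2 - 1) ^ 2 + 4 * b ^ 2) := by
      rw [← Real.sqrt_sq_eq_abs]
      exact Real.sqrt_lt_sqrt (by positivity) (by linarith)
    have h2 := neg_abs_le (a ^ 2 + b ^ 2 - 1)
    simp only [hg_def]
    linarith
  have hpg : ∀ b : ℝ, b ≠ 0 → p b = g b / b ^ 2 := by
    intro b hb
    have hb2 : (b : ℝ) ^ 2 ≠ 0 := pow_ne_zero 2 hb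
    rw [hp b hb]
    simp only [hg_def]
    field_simp
  have hk' : ∀ b : ℝ, b ≠ 0 → k b = -(a * g b) / (b * (g b + 1)) := by
    intro b hb
    have hb2 : (b : ℝ) ^ 2 ≠ 0 := pow_ne_zero 2 hb
    have hg1 : g b + 1 ≠ 0 := by have := hgpos b hb; linarith
    rw [hk b hb, hpg b hb]
    field_simp
  have hkabs : ∀ b : ℝ, b ≠ 0 → |k b| = |a| * g b / (|b| * (g b + 1)) := by
    intro b hb
    have hg := hgpos b hb
    rw [hk' b hb, abs_div, abs_neg, abs_mul, abs_mul, abs_of_pos hg,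
      abs_of_pos (by linarith : (0:ℝ) < g b + 1)]
  have hgt : Tendsto g (𝓝 (0:ℝ)) (𝓝 (a ^ 2 - 1)) := by
    have := hgcont.continuousAt (x := (0:ℝ))
    rwa [ContinuousAt, hg0] at this
  have hgt' : Tendsto g (𝓝[≠] (0:ℝ)) (𝓝 (a ^ 2 - 1)) :=
    hgt.mono_left nhdsWithin_le_nhds
  -- first limit
  have hfirst : Tendsto (fun b => |k b|) (𝓝[≠] (0 : ℝ)) atTop := by
    have hnum : Tendsto (fun b => |a| * g b) (𝓝[≠] (0:ℝ)) (𝓝 (|a| * (a ^ 2 - 1))) :=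
      (tendsto_const_nhds.mul hgt')
    have hden : Tendsto (fun b => |b| * (g b + 1)) (𝓝[≠] (0:ℝ)) (𝓝[>] (0:ℝ)) := by
      apply tendsto_nhdsWithin_of_tendsto_nhds_of_eventually_within
      · have : Tendsto (fun b : ℝ => |b| * (g b + 1)) (𝓝 (0:ℝ)) (𝓝 (|(0:ℝ)| * (g 0 + 1))) :=
          (continuous_abs.mul (hgcont.add continuous_const)).continuousAt
        simpa using this.mono_left nhdsWithin_le_nhds
      · filter_upwards [self_mem_nhdsWithin] with b hb
        have hb : b ≠ 0 := hb
        have := hgpos b hb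
        have : (0:ℝ) < |b| := abs_pos.mpr hb
        have := hgpos b hb
        exact mul_pos (abs_pos.mpr hb) (by linarith)
    have hinv : Tendsto (fun b => (|b| * (g b + 1))⁻¹) (𝓝[≠] (0:ℝ)) atTop :=
      tendsto_inv_nhdsGT_zero.comp hden
    have hmul : Tendsto (fun b => |a| * g b * (|b| * (g b + 1))⁻¹) (𝓝[≠] (0:ℝ)) atTop :=
      Filter.Tendsto.pos_mul_atTop (by nlinarith [abs_pos.mpr ha0]) hnum hinv
    apply hmul.congr'
    filter_upwards [self_mem_nhdsWithin] with b hb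
    rw [hkabs b hb, div_eq_mul_inv]
  refine ⟨hfirst, ?_, ?_⟩
  · -- second limit
    have hratio : ∀ b : ℝ, b ≠ 0 → p b / k b ^ 2 = (g b + 1) ^ 2 / (a ^ 2 * g b) := by
      intro b hb
      have hb2 : (b : ℝ) ^ 2 ≠ 0 := pow_ne_zero 2 hb
      have hg := hgpos b hb
      have hg0' : g b ≠ 0 := ne_of_gt hg
      have hg1 : g b + 1 ≠ 0 := by linarith
      rw [hk' b hb, hpg b hb, div_pow]
      rw [div_div_div_eq, neg_sq]
      rw [div_eq_div_iff (by positivity) (by positivity)]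
      ring
    have hlim : Tendsto (fun b => (g b + 1) ^ 2 / (a ^ 2 * g b)) (𝓝[≠] (0:ℝ))
        (𝓝 ((a ^ 2 - 1 + 1) ^ 2 / (a ^ 2 * (a ^ 2 - 1)))) := by
      apply Tendsto.div
      · exact ((hgt'.add tendsto_const_nhds).pow 2)
      · exact tendsto_const_nhds.mul hgt'
      · nlinarith
    have heq : (a ^ 2 - 1 + 1) ^ 2 / (a ^ 2 * (a ^ 2 - 1)) = a ^ 2 / (a ^ 2 - 1) := by
      have h1 : a ^ 2 ≠ 0 := by positivity
      have h2 : a ^ 2 - 1 ≠ 0 := by linarith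
      field_simp
      ring
    rw [heq] at hlim
    apply hlim.congr'
    filter_upwards [self_mem_nhdsWithin] with b hb
    exact (hratio b hb).symm
  · rw [le_div_iff₀ (by linarith)]
    linarith
end

section
/- Filter-gain blow-up as observability vanishes (step in the proof of the poor-observability failure mode): Let a ∈ ℝ with |a| > 1. For c ≠ 0 define s(c) := ((a² + c² − 1) + √((a² + c² − 1)² + 4c²))/(2c²) and the Kalman filter gain f(c) := s(c)·c/(c²s(c) + 1). Then lim_{c→0} c²s(c) = a² − 1, lim_{c→0} |f(c)| = +∞, and lim_{c→0} f(c)²·(c²s(c) + 1) = +∞ (the last quantity being the variance σ²_ν of the noise driving the filtered state). -/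
open Filter Topology

/-- Filter-gain blow-up as observability vanishes: for `|a| > 1`, with `s(c)` the
positive solution of the scalar filter Riccati equation with unit noise variances
and `f(c) = s(c)c/(c²s(c) + 1)` the associated stationary Kalman filter gain, one
has `c²s(c) → a² − 1`, `|f(c)| → +∞`, and `f(c)²(c²s(c) + 1) → +∞` as `c → 0`. -/
theorem filter_gain_blowup_vanishing_observability (a : ℝ) (ha : 1 < |a|)
    (s f : ℝ → ℝ)
    (hs : ∀ c : ℝ, c ≠ 0 →
      s c = ((a ^ 2 + c ^ 2 - 1) +
        Real.sqrt ((a ^ 2 + c ^ 2 - 1) ^ 2 + 4 * c ^ 2)) / (2 * c ^ 2))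
    (hf : ∀ c : ℝ, c ≠ 0 → f c = s c * c / (c ^ 2 * s c + 1)) :
    Tendsto (fun c => c ^ 2 * s c) (𝓝[≠] (0 : ℝ)) (𝓝 (a ^ 2 - 1)) ∧
      Tendsto (fun c => |f c|) (𝓝[≠] (0 : ℝ)) atTop ∧
      Tendsto (fun c => (f c) ^ 2 * (c ^ 2 * s c + 1)) (𝓝[≠] (0 : ℝ)) atTop := by
  have ha2 : 1 < a ^ 2 := by nlinarith [abs_nonneg a, sq_abs a]
  set g : ℝ → ℝ := fun c =>
    ((a ^ 2 + c ^ 2 - 1) + Real.sqrt ((a ^ 2 + c ^ 2 - 1) ^ 2 + 4 * c ^ 2)) / 2 with hg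
  have hgs : ∀ᶠ c in 𝓝[≠] (0 : ℝ), c ^ 2 * s c = g c := by
    filter_upwards [self_mem_nhdsWithin] with c hc
    have hc : c ≠ 0 := hc
    rw [hs c hc, hg]
    field_simp
  have hg0 : Tendsto g (𝓝 (0 : ℝ)) (𝓝 (a ^ 2 - 1)) := by
    have hcont : ContinuousAt g 0 := by
      apply ContinuousAt.div_const
      apply ContinuousAt.add (by fun_prop)
      exact (Real.continuous_sqrt.continuousAt).comp (by fun_prop)
    have hval : g 0 = a ^ 2 - 1 := by
      simp only [hg]
      rw [show (a ^ 2 + 0 ^ 2 - 1) ^ 2 + 4 * 0 ^ 2 = (a ^ 2 - 1) ^ 2 by ring,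
        Real.sqrt_sq (by linarith)]
      ring
    simpa [hval] using hcont.tendsto
  have h1 : Tendsto (fun c => c ^ 2 * s c) (𝓝[≠] (0 : ℝ)) (𝓝 (a ^ 2 - 1)) :=
    (hg0.mono_left nhdsWithin_le_nhds).congr' (hgs.mono fun c h => h.symm)
  -- eventual positivity of G := c^2 * s c
  have hGpos : ∀ᶠ c in 𝓝[≠] (0 : ℝ), 0 < c ^ 2 * s c :=
    h1.eventually (eventually_gt_nhds (by linarith))
  -- ratio limit G/(G+1) and G^2/(G+1)
  have hane : (a ^ 2 - 1) + 1 ≠ 0 := by nlinarith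
  have hden : Tendsto (fun c => c ^ 2 * s c + 1) (𝓝[≠] (0 : ℝ)) (𝓝 ((a ^ 2 - 1) + 1)) :=
    h1.add tendsto_const_nhds
  have hr1 : Tendsto (fun c => (c ^ 2 * s c) / (c ^ 2 * s c + 1)) (𝓝[≠] (0 : ℝ))
      (𝓝 ((a ^ 2 - 1) / ((a ^ 2 - 1) + 1))) := h1.div hden hane
  have hr2 : Tendsto (fun c => (c ^ 2 * s c) ^ 2 / (c ^ 2 * s c + 1)) (𝓝[≠] (0 : ℝ))
      (𝓝 ((a ^ 2 - 1) ^ 2 / ((a ^ 2 - 1) + 1))) := (h1.pow 2).div hden hane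
  -- |c|⁻¹ and (c^2)⁻¹ blow up
  have habs : Tendsto (fun c : ℝ => |c|) (𝓝[≠] (0 : ℝ)) (𝓝[>] (0 : ℝ)) := by
    apply tendsto_nhdsWithin_of_tendsto_nhds_of_eventually_within
    · simpa using (continuous_abs.tendsto (0 : ℝ)).mono_left nhdsWithin_le_nhds
    · filter_upwards [self_mem_nhdsWithin] with c hc
      exact abs_pos.mpr hc
  have hsq : Tendsto (fun c : ℝ => c ^ 2) (𝓝[≠] (0 : ℝ)) (𝓝[>] (0 : ℝ)) := by
    apply tendsto_nhdsWithin_of_tendsto_nhds_of_eventually_within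
    · simpa using ((continuous_pow 2).tendsto (0 : ℝ)).mono_left nhdsWithin_le_nhds
    · filter_upwards [self_mem_nhdsWithin] with c hc
      have hc : c ≠ 0 := hc
      exact Set.mem_Ioi.mpr (by positivity)
  have hinvabs : Tendsto (fun c : ℝ => |c|⁻¹) (𝓝[≠] (0 : ℝ)) atTop :=
    tendsto_inv_nhdsGT_zero.comp habs
  have hinvsq : Tendsto (fun c : ℝ => (c ^ 2)⁻¹) (𝓝[≠] (0 : ℝ)) atTop :=
    tendsto_inv_nhdsGT_zero.comp hsq
  constructor
  · exact h1
  constructor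
  · -- |f c| = (G/(G+1)) * |c|⁻¹
    have key : ∀ᶠ c in 𝓝[≠] (0 : ℝ),
        (c ^ 2 * s c) / (c ^ 2 * s c + 1) * |c|⁻¹ = |f c| := by
      filter_upwards [self_mem_nhdsWithin, hGpos] with c hc hG
      have hc : c ≠ 0 := hc
      have hc2 : (0 : ℝ) < c ^ 2 := by positivity
      have hsc : 0 < s c := by nlinarith
      have hd : (0 : ℝ) < c ^ 2 * s c + 1 := by linarith
      rw [hf c hc, abs_div, abs_of_pos hd, abs_mul, abs_of_pos hsc]
      rw [div_mul_eq_mul_div]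
      congr 1
      rw [← sq_abs c]
      field_simp [abs_ne_zero.mpr hc]
    have hpos : (0 : ℝ) < (a ^ 2 - 1) / ((a ^ 2 - 1) + 1) := by
      apply div_pos <;> linarith
    exact Tendsto.congr' key (Tendsto.pos_mul_atTop hpos hr1 hinvabs)
  · -- f c ^2 * (G+1) = (G²/(G+1)) * (c²)⁻¹
    have key : ∀ᶠ c in 𝓝[≠] (0 : ℝ),
        (c ^ 2 * s c) ^ 2 / (c ^ 2 * s c + 1) * (c ^ 2)⁻¹
          = (f c) ^ 2 * (c ^ 2 * s c + 1) := by
      filter_upwards [self_mem_nhdsWithin, hGpos] with c hc hG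
      have hc : c ≠ 0 := hc
      have hd : (0 : ℝ) < c ^ 2 * s c + 1 := by nlinarith
      rw [hf c hc]
      field_simp
    have hpos : (0 : ℝ) < (a ^ 2 - 1) ^ 2 / ((a ^ 2 - 1) + 1) := by
      apply div_pos (pow_pos (by linarith) 2) (by linarith)
    exact Tendsto.congr' key (Tendsto.pos_mul_atTop hpos hr2 hinvsq)
end
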